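/- Let ζ̂ be a nonnegative random variable defined on the same probability space as (ζ,V) with ℙ(ζ̂ ≤ ζ) = 1, and suppose that for all s, u ∈ ℝ₊ and A ∈ 𝒮, ℙ(ζ̂ ≤ s, 0 < ζ − ζ̂ ≤ u, V ∈ A) = ℙ(ζ̂ ≤ s, ζ̂ < ζ)·(1 − e^{−γu})·μ(A). Then for every t ∈ ℝ₊ with ℙ(ζ̂ ≤ t, ζ > t) > 0, the conditional distribution of (ζ − t, V) given the event {ζ̂ ≤ t, ζ > t} equals ν_γ × μ. -/

import Mathlib

/-!
Put `D = {ζ̂ < ζ}` and `ρ` for the law of `ζ̂` under `P` restricted to `D`. Tested on the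
π-system of boxes `Iic s ×ˢ Iic u ×ˢ A`, the hypothesis says that under `P` restricted to `D` the
triple `(ζ̂, ζ - ζ̂, V)` has law `ρ ⊗ ν_γ ⊗ μ`. The event `{ζ̂ ≤ t < ζ}` lies in `D`; given
`ζ̂ = x ≤ t` it asks the exponential gap `ζ - ζ̂` to exceed `t - x`, and by memorylessness the
overshoot `ζ - t` is then again `ν_γ`-distributed and independent of `V`. So the law of
`(ζ - t, V)` on the event is `c • (ν_γ ⊗ μ)`, where necessarily `c = P {ζ̂ ≤ t < ζ}`.
-/

open MeasureTheory ProbabilityTheory Real Set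

/-- The exponential distribution on `[0, ∞)` with mean `γ⁻¹` (rate `γ`), as a measure on `ℝ`. -/
noncomputable def expν (γ : ℝ) : Measure ℝ :=
  MeasureTheory.volume.withDensity
    (fun x => if 0 ≤ x then ENNReal.ofReal (γ * Real.exp (-γ * x)) else 0)

lemma expν_eq_expMeasure (γ : ℝ) : expν γ = expMeasure γ := by
  rw [expν, expMeasure, gammaMeasure]
  congr 1 with x
  rw [show gammaPDF 1 γ x = exponentialPDF γ x from rfl, exponentialPDF_eq, neg_mul]
  split_ifs <;> simp

lemma isProbabilityMeasure_expν {γ : ℝ} (hγ : 0 < γ) : IsProbabilityMeasure (expν γ) :=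
  expν_eq_expMeasure γ ▸ isProbabilityMeasure_expMeasure hγ

lemma expν_Iic {γ : ℝ} (hγ : 0 < γ) (u : ℝ) :
    expν γ (Iic u) = ENNReal.ofReal (1 - exp (-(γ * u))) := by
  have := isProbabilityMeasure_expMeasure hγ
  rw [expν_eq_expMeasure, ← ofReal_cdf, cdf_expMeasure_eq hγ]
  split_ifs with hu
  · rfl
  · rw [ENNReal.ofReal_zero, ENNReal.ofReal_of_nonpos]
    simp only [sub_nonpos, one_le_exp_iff]
    nlinarith

lemma expν_Ioc {γ : ℝ} (hγ : 0 < γ) {a : ℝ} (ha : 0 ≤ a) (b : ℝ) :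
    expν γ (Ioc a b) = ENNReal.ofReal (exp (-(γ * a)) - exp (-(γ * b))) := by
  have := isProbabilityMeasure_expMeasure hγ
  rw [expν_eq_expMeasure, ← measure_cdf (expMeasure γ), StieltjesFunction.measure_Ioc,
    cdf_expMeasure_eq hγ, cdf_expMeasure_eq hγ, if_pos ha]
  split_ifs with hb
  · ring_nf
  · rw [ENNReal.ofReal_of_nonpos, ENNReal.ofReal_of_nonpos]
    · simp only [sub_nonpos, exp_le_exp]
      nlinarith
    · simp only [zero_sub, neg_nonpos, sub_nonneg, exp_le_one_iff]
      nlinarith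

-- Memorylessness of the exponential distribution.
lemma map_sub_restrict_Ioi_expν {γ : ℝ} (hγ : 0 < γ) {a : ℝ} (ha : 0 ≤ a) :
    ((expν γ).restrict (Ioi a)).map (· - a) = ENNReal.ofReal (exp (-(γ * a))) • expν γ := by
  have := isProbabilityMeasure_expν hγ
  refine Measure.ext_of_Iic _ _ fun u => ?_
  have hpre : (· - a) ⁻¹' Iic u ∩ Ioi a = Ioc a (u + a) := by
    ext y; simp only [mem_inter_iff, mem_preimage, mem_Iic, mem_Ioi, mem_Ioc]; constructor <;>
      rintro ⟨h₁, h₂⟩ <;> constructor <;> linarith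
  rw [Measure.map_apply (measurable_sub_const a) measurableSet_Iic,
    Measure.restrict_apply (measurable_sub_const a measurableSet_Iic), hpre, expν_Ioc hγ ha,
    Measure.smul_apply, smul_eq_mul, expν_Iic hγ, ← ENNReal.ofReal_mul (exp_nonneg _), mul_sub,
    mul_one, ← exp_add]
  ring_nf

lemma map_prodMap_restrict_Ioi_expν_prod {γ : ℝ} (hγ : 0 < γ) {S : Type*} [MeasurableSpace S]
    (μ : Measure S) [SFinite μ] {a : ℝ} (ha : 0 ≤ a) :
    (((expν γ).prod μ).restrict (Ioi a ×ˢ univ)).map (Prod.map (· - a) id) =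
      ENNReal.ofReal (exp (-(γ * a))) • (expν γ).prod μ := by
  have := isProbabilityMeasure_expν hγ
  rw [← Measure.restrict_prod_eq_prod_univ, ← Measure.map_prod_map _ _ (measurable_sub_const a)
    measurable_id, Measure.map_id, map_sub_restrict_Ioi_expν hγ ha, Measure.prod_smul_left]

lemma map_restrict_prod_expν_prod {γ : ℝ} (hγ : 0 < γ) (ρ : Measure ℝ) [SFinite ρ]
    {S : Type*} [MeasurableSpace S] (μ : Measure S) [SFinite μ] (t : ℝ) :
    ((ρ.prod ((expν γ).prod μ)).restrict {p | p.1 ≤ t ∧ t < p.1 + p.2.1}).map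
        (fun p => (p.1 + p.2.1 - t, p.2.2)) =
      (∫⁻ x in Iic t, ENNReal.ofReal (exp (-(γ * (t - x)))) ∂ρ) • (expν γ).prod μ := by
  have := isProbabilityMeasure_expν hγ
  have hg : Measurable fun p : ℝ × ℝ × S => (p.1 + p.2.1 - t, p.2.2) := by fun_prop
  have hB : MeasurableSet {p : ℝ × ℝ × S | p.1 ≤ t ∧ t < p.1 + p.2.1} :=
    (measurableSet_le measurable_fst measurable_const).inter
      (measurableSet_lt measurable_const (measurable_fst.add measurable_snd.fst))
  have hf : Measurable fun x : ℝ => ENNReal.ofReal (exp (-(γ * (t - x)))) := by fun_prop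
  ext C hC
  rw [Measure.map_apply hg hC, Measure.restrict_apply (hg hC),
    Measure.prod_apply (hg hC |>.inter hB), Measure.smul_apply, smul_eq_mul,
    ← lintegral_mul_const _ hf, ← lintegral_indicator measurableSet_Iic]
  refine lintegral_congr fun x => ?_
  by_cases hx : x ≤ t
  · have hsec : Prod.mk x ⁻¹' ((fun p : ℝ × ℝ × S => (p.1 + p.2.1 - t, p.2.2)) ⁻¹' C ∩
        {p | p.1 ≤ t ∧ t < p.1 + p.2.1}) =
          Prod.map (· - (t - x)) id ⁻¹' C ∩ Ioi (t - x) ×ˢ univ := by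
      ext ⟨y, v⟩
      simp only [mem_preimage, mem_inter_iff, mem_ofPred_eq, Prod.map_apply, id, mem_prod, mem_Ioi,
        mem_univ, and_true]
      rw [show x + y - t = y - (t - x) by ring]
      constructor
      · rintro ⟨h, -, h'⟩; exact ⟨h, by linarith⟩
      · rintro ⟨h, h'⟩; exact ⟨h, hx, by linarith⟩
    have hshift : Measurable (Prod.map (· - (t - x)) (id : S → S)) :=
      (measurable_sub_const _).prodMap measurable_id
    rw [indicator_of_mem (mem_Iic.2 hx), hsec, ← Measure.restrict_apply (hshift hC),
      ← Measure.map_apply hshift hC,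
      map_prodMap_restrict_Ioi_expν_prod hγ μ (sub_nonneg.2 hx), Measure.smul_apply, smul_eq_mul]
  · have hsec : Prod.mk x ⁻¹' ((fun p : ℝ × ℝ × S => (p.1 + p.2.1 - t, p.2.2)) ⁻¹' C ∩
        {p | p.1 ≤ t ∧ t < p.1 + p.2.1}) = ∅ :=
      eq_empty_of_forall_notMem fun p hp => hx hp.2.1
    rw [indicator_of_notMem (by simpa using hx), hsec, measure_empty]

def finiteSpanningSetsInIic (ρ : Measure ℝ) [IsFiniteMeasure ρ] :
    ρ.FiniteSpanningSetsIn (range Iic) where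
  set n := Iic n
  set_mem _ := mem_range_self _
  finite _ := measure_lt_top _ _
  spanning := eq_univ_of_forall fun x => mem_iUnion.2 (exists_nat_ge x)

lemma prod_prod_eq_of_Iic (ρ ν : Measure ℝ) [IsFiniteMeasure ρ] [IsFiniteMeasure ν]
    {S : Type*} [MeasurableSpace S] (μ : Measure S) [SigmaFinite μ] {m : Measure (ℝ × ℝ × S)}
    (h : ∀ s u A, MeasurableSet A → m (Iic s ×ˢ Iic u ×ˢ A) = ρ (Iic s) * (ν (Iic u) * μ A)) :
    ρ.prod (ν.prod μ) = m := by
  have hIic : MeasurableSpace.generateFrom (range (Iic : ℝ → Set ℝ)) = borel ℝ :=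
    (borel_eq_generateFrom_Iic ℝ).symm
  refine Measure.prod_eq_generateFrom hIic
    (generateFrom_eq_prod hIic MeasurableSpace.generateFrom_measurableSet
      (finiteSpanningSetsInIic ν).isCountablySpanning isCountablySpanning_measurableSet)
    isPiSystem_Iic (isPiSystem_Iic.prod MeasurableSpace.isPiSystem_measurableSet)
    (finiteSpanningSetsInIic ρ) ((finiteSpanningSetsInIic ν).prod μ.toFiniteSpanningSetsIn) ?_
  rintro _ ⟨s, rfl⟩ _ ⟨_, ⟨u, rfl⟩, A, hA, rfl⟩
  rw [Measure.prod_prod]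
  exact h s u A hA

lemma map_eq_prod_prod_of_Iic {Ω : Type*} [MeasurableSpace Ω] {P : Measure Ω} [IsFiniteMeasure P]
    {S : Type*} [MeasurableSpace S] {X Y : Ω → ℝ} {V : Ω → S} (hX : Measurable X)
    (hY : Measurable Y) (hV : Measurable V) (ν : Measure ℝ) [IsFiniteMeasure ν] (μ : Measure S)
    [SigmaFinite μ]
    (h : ∀ s u A, MeasurableSet A →
      P {ω | X ω ≤ s ∧ Y ω ≤ u ∧ V ω ∈ A} = P {ω | X ω ≤ s} * (ν (Iic u) * μ A)) :
    P.map (fun ω => (X ω, Y ω, V ω)) = (P.map X).prod (ν.prod μ) := by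
  refine (prod_prod_eq_of_Iic _ ν μ fun s u A hA => ?_).symm
  rw [Measure.map_apply (hX.prodMk (hY.prodMk hV)) (measurableSet_Iic.prod
      (measurableSet_Iic.prod hA)), Measure.map_apply hX measurableSet_Iic]
  exact h s u A hA

lemma restrict_lt_factorization {Ω : Type*} [MeasurableSpace Ω] (P : Measure Ω)
    {S : Type*} [MeasurableSpace S] (μ : Measure S) {γ : ℝ} (hγ : 0 < γ) {ζ ζhat : Ω → ℝ}
    {V : Ω → S} (hζ : Measurable ζ) (hζhat : Measurable ζhat) (hζhat0 : ∀ ω, 0 ≤ ζhat ω)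
    (hfact : ∀ s u : ℝ, 0 ≤ s → 0 ≤ u → ∀ A : Set S, MeasurableSet A →
      P {ω | ζhat ω ≤ s ∧ ζhat ω < ζ ω ∧ ζ ω - ζhat ω ≤ u ∧ V ω ∈ A} =
        P {ω | ζhat ω ≤ s ∧ ζhat ω < ζ ω} *
          (ENNReal.ofReal (1 - Real.exp (-γ * u)) * μ A))
    (s u : ℝ) {A : Set S} (hA : MeasurableSet A) :
    P.restrict {ω | ζhat ω < ζ ω} {ω | ζhat ω ≤ s ∧ ζ ω - ζhat ω ≤ u ∧ V ω ∈ A} =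
      P.restrict {ω | ζhat ω < ζ ω} {ω | ζhat ω ≤ s} * (expν γ (Iic u) * μ A) := by
  rw [Measure.restrict_apply' (measurableSet_lt hζhat hζ),
    Measure.restrict_apply' (measurableSet_lt hζhat hζ)]
  rcases lt_or_ge s 0 with hs | hs
  · have hs' : ∀ ω, ¬ ζhat ω ≤ s := fun ω hω => (hζhat0 ω).not_gt (hω.trans_lt hs)
    simp [hs']
  rcases lt_or_ge u 0 with hu | hu
  · have hempty : {ω | ζhat ω ≤ s ∧ ζ ω - ζhat ω ≤ u ∧ V ω ∈ A} ∩ {ω | ζhat ω < ζ ω} = ∅ :=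
      eq_empty_of_forall_notMem fun ω ⟨⟨_, hω, _⟩, (hlt : ζhat ω < ζ ω)⟩ => by linarith
    rw [hempty, measure_empty, expν_Iic hγ, ENNReal.ofReal_of_nonpos, zero_mul, mul_zero]
    simp only [sub_nonpos, one_le_exp_iff]
    nlinarith
  have hset : {ω | ζhat ω ≤ s ∧ ζ ω - ζhat ω ≤ u ∧ V ω ∈ A} ∩ {ω | ζhat ω < ζ ω} =
      {ω | ζhat ω ≤ s ∧ ζhat ω < ζ ω ∧ ζ ω - ζhat ω ≤ u ∧ V ω ∈ A} := by
    ext ω; simp only [mem_inter_iff, mem_ofPred_eq]; tauto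
  rw [hset, hfact s u hs hu A hA, expν_Iic hγ, neg_mul]
  rfl

theorem stmt_8_general {Ω : Type*} [MeasurableSpace Ω] (P : Measure Ω) [IsProbabilityMeasure P]
    {S : Type*} [MeasurableSpace S] (μ : Measure S) [IsProbabilityMeasure μ]
    (γ : ℝ) (hγ : 0 < γ)
    (ζ : Ω → ℝ) (V : Ω → S) (hζm : Measurable ζ) (hVm : Measurable V)
    (ζhat : Ω → ℝ) (hζhatm : Measurable ζhat) (hζhat0 : ∀ ω, 0 ≤ ζhat ω)
    (hfact : ∀ s u : ℝ, 0 ≤ s → 0 ≤ u → ∀ A : Set S, MeasurableSet A →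
      P {ω | ζhat ω ≤ s ∧ ζhat ω < ζ ω ∧ ζ ω - ζhat ω ≤ u ∧ V ω ∈ A} =
        P {ω | ζhat ω ≤ s ∧ ζhat ω < ζ ω} *
          (ENNReal.ofReal (1 - Real.exp (-γ * u)) * μ A)) :
    ∀ t, 0 ≤ t → 0 < P {ω | ζhat ω ≤ t ∧ t < ζ ω} →
      Measure.map (fun ω => (ζ ω - t, V ω)) (P[|{ω | ζhat ω ≤ t ∧ t < ζ ω}]) =
        (expν γ).prod μ := by
  intro t _ hE
  have := isProbabilityMeasure_expν hγ
  set D := {ω | ζhat ω < ζ ω}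
  set E := {ω | ζhat ω ≤ t ∧ t < ζ ω}
  set B := {p : ℝ × ℝ × S | p.1 ≤ t ∧ t < p.1 + p.2.1}
  set Ψ := fun ω => (ζhat ω, ζ ω - ζhat ω, V ω)
  have hΨ : Measurable Ψ := hζhatm.prodMk ((hζm.sub hζhatm).prodMk hVm)
  have hB : MeasurableSet B := (measurableSet_le measurable_fst measurable_const).inter
    (measurableSet_lt measurable_const (measurable_fst.add measurable_snd.fst))
  have hg : Measurable fun p : ℝ × ℝ × S => (p.1 + p.2.1 - t, p.2.2) := by fun_prop
  have hlaw : (P.restrict D).map Ψ = ((P.restrict D).map ζhat).prod ((expν γ).prod μ) :=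
    map_eq_prod_prod_of_Iic hζhatm (hζm.sub hζhatm) hVm _ μ fun s u _ hA =>
      restrict_lt_factorization P μ hγ hζm hζhatm hζhat0 hfact s u hA
  have hE_eq : E = Ψ ⁻¹' B ∩ D := by
    ext ω
    simp only [E, D, B, Ψ, mem_inter_iff, mem_preimage, mem_ofPred_eq, add_sub_cancel]
    exact ⟨fun h => ⟨h, h.1.trans_lt h.2⟩, And.left⟩
  set c := ∫⁻ x in Iic t, ENNReal.ofReal (exp (-(γ * (t - x)))) ∂(P.restrict D).map ζhat
  have hmap : (P.restrict E).map (fun ω => (ζ ω - t, V ω)) = c • (expν γ).prod μ := by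
    rw [hE_eq, ← Measure.restrict_restrict (hΨ hB),
      show (fun ω => (ζ ω - t, V ω)) = (fun p : ℝ × ℝ × S => (p.1 + p.2.1 - t, p.2.2)) ∘ Ψ by
        ext ω <;> simp [Ψ],
      ← Measure.map_map hg hΨ, ← Measure.restrict_map hΨ hB, hlaw, map_restrict_prod_expν_prod hγ]
  have hPE : P E = c := by
    simpa [Measure.map_apply (by fun_prop : Measurable fun ω => (ζ ω - t, V ω))
      MeasurableSet.univ] using congrArg (· univ) hmap
  rw [ProbabilityTheory.cond, Measure.map_smul, hmap, smul_smul, hPE,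
    ENNReal.inv_mul_cancel (hPE ▸ hE.ne') (hPE ▸ measure_ne_top P E), one_smul]

/-- Theorem 3.2 (converse part): if `ℙ(ζ̂ ≤ ζ) = 1` and
`ℙ(ζ̂ ≤ s, 0 < ζ − ζ̂ ≤ u, V ∈ A) = ℙ(ζ̂ ≤ s, ζ̂ < ζ)(1 − e^{−γu})μ(A)` for all `s, u, A`,
then for every `t` with `ℙ(ζ̂ ≤ t, ζ > t) > 0` the conditional law of `(ζ − t, V)` given
`{ζ̂ ≤ t, ζ > t}` is `ν_γ × μ`. -/
theorem stmt_8 {Ω : Type*} [MeasurableSpace Ω] (P : Measure Ω) [IsProbabilityMeasure P]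
    {S : Type*} [MeasurableSpace S] (μ : Measure S) [IsProbabilityMeasure μ]
    (γ : ℝ) (hγ : 0 < γ)
    (ζ : Ω → ℝ) (V : Ω → S) (hζm : Measurable ζ) (hVm : Measurable V)
    (hζ0 : ∀ ω, 0 ≤ ζ ω)
    (ζhat : Ω → ℝ) (hζhatm : Measurable ζhat) (hζhat0 : ∀ ω, 0 ≤ ζhat ω)
    (hle : P {ω | ζhat ω ≤ ζ ω} = 1)
    (hfact : ∀ s u : ℝ, 0 ≤ s → 0 ≤ u → ∀ A : Set S, MeasurableSet A →
      P {ω | ζhat ω ≤ s ∧ ζhat ω < ζ ω ∧ ζ ω - ζhat ω ≤ u ∧ V ω ∈ A} =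
        P {ω | ζhat ω ≤ s ∧ ζhat ω < ζ ω} *
          (ENNReal.ofReal (1 - Real.exp (-γ * u)) * μ A)) :
    ∀ t, 0 ≤ t → 0 < P {ω | ζhat ω ≤ t ∧ t < ζ ω} →
      Measure.map (fun ω => (ζ ω - t, V ω)) (P[|{ω | ζhat ω ≤ t ∧ t < ζ ω}]) =
        (expν γ).prod μ :=
  stmt_8_general P μ γ hγ ζ V hζm hVm ζhat hζhatm hζhat0 hfact
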